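/- arXiv:2210.06460 — 2 statements merged into one kernel-verified Lean document; each statement's English description precedes it below -/
import Mathlib

section
/- Under assumptions (A0) and (A1), for every region index l (1 ≤ l ≤ L): (a) on S_{β^l} the h smallest squared residuals are strictly ordered, i.e. r²_{k_1(β^l)}(β) < r²_{k_2(β^l)}(β) < ... < r²_{k_h(β^l)}(β) for every β ∈ S_{β^l}; and (b) for every η ∈ S_{β^l} there exists δ > 0 such that, almost surely, for every β in the open ball B(η, δ) one has O^n(β) = (1/n) Σ_{i=1}^h r²_{k_i(η)}(β), where k_i(η) = k_i(β^l). -/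
open MeasureTheory Finset Metric
open scoped ENNReal

noncomputable section

/-- The i-th residual `r_i(β) = y_i - w_i'β`. -/
def res {n p : ℕ} (w : Fin n → Fin p → ℝ) (y : Fin n → ℝ) (β : Fin p → ℝ) (i : Fin n) : ℝ :=
  y i - ∑ j, w i j * β j

/-- The empirical LTS objective `O^n(β) = (1/n) ∑_{i=1}^h r²_{i:n}(β)`: the sum of the `h`
smallest squared residuals, i.e. the minimum over all size-`h` index sets of the sum of the
corresponding squared residuals. -/
def Oemp {n p : ℕ} (w : Fin n → Fin p → ℝ) (y : Fin n → ℝ) (h : ℕ) (β : Fin p → ℝ) : ℝ :=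
  (1 / (n : ℝ)) *
    sInf ((fun s : Finset (Fin n) => ∑ i ∈ s, (res w y β i) ^ 2) '' {s | s.card = h})

/-- `k` enumerates the indices of the `h` smallest squared residuals at `β`,
in increasing order. -/
def IsHSeq {n p : ℕ} (w : Fin n → Fin p → ℝ) (y : Fin n → ℝ) {h : ℕ}
    (k : Fin h → Fin n) (β : Fin p → ℝ) : Prop :=
  Function.Injective k ∧
    (∀ i j : Fin h, i ≤ j → (res w y β (k i)) ^ 2 ≤ (res w y β (k j)) ^ 2) ∧
    (∀ m : Fin n, m ∉ Set.range k → ∀ i : Fin h, (res w y β (k i)) ^ 2 ≤ (res w y β m) ^ 2)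

/-- The region `S_{β^l}`: the set of `β` whose (unique) `h`-index sequence is `k`. -/
def Sreg {n p : ℕ} (w : Fin n → Fin p → ℝ) (y : Fin n → ℝ) {h : ℕ}
    (k : Fin h → Fin n) : Set (Fin p → ℝ) :=
  {β | IsHSeq w y k β ∧ ∀ k' : Fin h → Fin n, IsHSeq w y k' β → k' = k}

/-- Assumption (A1): the design matrix `X_n` and each of its `h`-row submatrices
have full rank `p`. -/
def A1 {n p : ℕ} (w : Fin n → Fin p → ℝ) (h : ℕ) : Prop :=
  (Matrix.of w).rank = p ∧
    ∀ s : Finset (Fin n), s.card = h →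
      ((Matrix.of w).submatrix (fun i : {x // x ∈ s} => (i : Fin n)) id).rank = p

/-- Assumption (A0): for every `β`, `W(β) = (y - w'β)²` has a density
(its law is absolutely continuous w.r.t. Lebesgue measure). -/
def A0 {Ω : Type*} [MeasurableSpace Ω] (P : Measure Ω) {n p : ℕ}
    (w : Ω → Fin n → Fin p → ℝ) (y : Ω → Fin n → ℝ) : Prop :=
  ∀ (β : Fin p → ℝ) (i : Fin n),
    (P.map fun ω => (res (w ω) (y ω) β i) ^ 2) ≪ (volume : Measure ℝ)

/-!
At a point of `S_{β^l}`, a tie between two selected squared residuals, or between the largest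
selected one and an unselected one, survives composing the index sequence with the transposition
of the two tied indices; that gives a second `h`-index sequence and contradicts uniqueness. So at
`η ∈ S_{β^l}` the selected squared residuals lie strictly below all others; by continuity this
persists on a ball, where the `h` selected indices therefore still carry the `h` smallest squared
residuals and `O^n` is their average.
-/

namespace Finset

variable {ι M : Type*} [AddCommMonoid M] [PartialOrder M] [IsOrderedAddMonoid M]

theorem sum_le_sum_of_card_eq_of_forall_le {A B : Finset ι} {f : ι → M} (hAB : #A = #B)
    (h : ∀ a ∈ A, ∀ b ∈ B, f a ≤ f b) : ∑ a ∈ A, f a ≤ ∑ b ∈ B, f b := by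
  let e := equivOfCardEq hAB
  calc ∑ a ∈ A, f a = ∑ a : A, f a := (sum_coe_sort A f).symm
    _ ≤ ∑ a : A, f (e a) := sum_le_sum fun a _ => h a a.2 (e a) (e a).2
    _ = ∑ b : B, f b := e.sum_comp fun b => f b
    _ = ∑ b ∈ B, f b := sum_coe_sort B f

theorem sum_le_sum_of_card_eq_of_forall_mem_le_notMem [DecidableEq ι] {s₀ s : Finset ι}
    {f : ι → M} (hs : #s₀ = #s) (h : ∀ a ∈ s₀, ∀ b ∉ s₀, f a ≤ f b) :
    ∑ i ∈ s₀, f i ≤ ∑ i ∈ s, f i := by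
  rw [← sum_inter_add_sum_sdiff s₀ s, ← sum_inter_add_sum_sdiff s s₀, inter_comm s s₀]
  gcongr 1
  exact sum_le_sum_of_card_eq_of_forall_le (card_sdiff_comm hs)
    fun a ha b hb => h a (mem_sdiff.1 ha).1 b (mem_sdiff.1 hb).2

end Finset

section Residuals

open Topology

variable {n p h : ℕ} {w : Fin n → Fin p → ℝ} {y : Fin n → ℝ} {k : Fin h → Fin n}
  {β : Fin p → ℝ}

theorem continuous_sq_res (w : Fin n → Fin p → ℝ) (y : Fin n → ℝ) (i : Fin n) :
    Continuous fun β => res w y β i ^ 2 := by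
  unfold res
  fun_prop

theorem Oemp_eq_of_forall_sq_res_le (hk : Function.Injective k)
    (hle : ∀ m ∉ Set.range k, ∀ i, res w y β (k i) ^ 2 ≤ res w y β m ^ 2) :
    Oemp w y h β = 1 / (n : ℝ) * ∑ i, res w y β (k i) ^ 2 := by
  classical
  let s₀ : Finset (Fin n) := univ.map ⟨k, hk⟩
  have hs₀ : #s₀ = h := by simp [s₀]
  have hleast : IsLeast ((fun s : Finset (Fin n) => ∑ i ∈ s, res w y β i ^ 2) '' {s | #s = h})
      (∑ i ∈ s₀, res w y β i ^ 2) := by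
    refine ⟨⟨s₀, hs₀, rfl⟩, ?_⟩
    rintro _ ⟨s, hs, rfl⟩
    refine sum_le_sum_of_card_eq_of_forall_mem_le_notMem (hs₀.trans hs.symm) ?_
    intro a ha b hb
    obtain ⟨i, -, rfl⟩ := mem_map.1 ha
    exact hle b (fun ⟨j, hj⟩ => hb (mem_map.2 ⟨j, mem_univ j, hj⟩)) i
  rw [Oemp, hleast.csInf_eq, sum_map]
  rfl

theorem IsHSeq.swap_comp (hk : IsHSeq w y k β) {a b : Fin n}
    (hab : res w y β a ^ 2 = res w y β b ^ 2) : IsHSeq w y (Equiv.swap a b ∘ k) β := by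
  have hval : ∀ x, res w y β (Equiv.swap a b x) ^ 2 = res w y β x ^ 2 :=
    Equiv.apply_swap_eq_self (v := fun x => res w y β x ^ 2) hab
  refine ⟨(Equiv.swap a b).injective.comp hk.1, fun i j hij => ?_, fun m hm i => ?_⟩
  · simp only [Function.comp_apply, hval]
    exact hk.2.1 i j hij
  · rw [Function.comp_apply, hval, ← hval m]
    exact hk.2.2 _ (fun ⟨t, ht⟩ => hm ⟨t, by simp [ht]⟩) i

theorem swap_comp_eq_of_mem_Sreg (hβ : β ∈ Sreg w y k) {a b : Fin n}
    (hab : res w y β a ^ 2 = res w y β b ^ 2) : Equiv.swap a b ∘ k = k :=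
  hβ.2 _ (hβ.1.swap_comp hab)

theorem sq_res_lt_of_mem_Sreg (hβ : β ∈ Sreg w y k) {i j : Fin h} (hij : i < j) :
    res w y β (k i) ^ 2 < res w y β (k j) ^ 2 := by
  refine (hβ.1.2.1 i j hij.le).lt_of_ne fun heq => hij.ne' (hβ.1.1 ?_)
  simpa using congrFun (swap_comp_eq_of_mem_Sreg hβ heq) i

theorem sq_res_lt_of_mem_Sreg_of_notMem_range (hβ : β ∈ Sreg w y k) {m : Fin n}
    (hm : m ∉ Set.range k) (i : Fin h) :
    res w y β (k i) ^ 2 < res w y β m ^ 2 := by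
  let L : Fin h := ⟨h - 1, Nat.sub_one_lt_of_lt i.isLt⟩
  have hiL : i ≤ L := Fin.le_iff_val_le_val.2 (Nat.le_sub_one_of_lt i.isLt)
  refine (hβ.1.2.1 i L hiL).trans_lt <| (hβ.1.2.2 m hm L).lt_of_ne fun heq => hm ⟨L, ?_⟩
  simpa using (congrFun (swap_comp_eq_of_mem_Sreg hβ heq) L).symm

theorem eventually_sq_res_lt_of_mem_Sreg {η : Fin p → ℝ} (hη : η ∈ Sreg w y k) :
    ∀ᶠ β in 𝓝 η, ∀ m ∉ Set.range k, ∀ i, res w y β (k i) ^ 2 < res w y β m ^ 2 := by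
  refine Filter.eventually_all.2 fun m => ?_
  by_cases hm : m ∈ Set.range k
  · exact Filter.Eventually.of_forall fun _ hm' => absurd hm hm'
  · refine (Filter.eventually_all.2 fun i => ?_).mono fun _ hβ _ => hβ
    exact (continuous_sq_res w y _).continuousAt.eventually_lt
      (continuous_sq_res w y m).continuousAt (sq_res_lt_of_mem_Sreg_of_notMem_range hη hm i)

end Residuals

/-- Lemma 2.1 (i): under (A0) and (A1), almost surely, for every region `S_{β^l}`
(indexed by its `h`-index sequence `k`): (a) on `S_{β^l}` the `h` smallest squared residuals
are strictly ordered; (b) around every `η ∈ S_{β^l}` there is a ball on which `O^n` is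
the average of the squared residuals with indices `k_1(η), …, k_h(η)`. -/
theorem stmt_0 {Ω : Type*} [MeasurableSpace Ω] (P : Measure Ω)
    (n p hn : ℕ)
    (w : Ω → Fin n → Fin p → ℝ) (y : Ω → Fin n → ℝ) :
    ∀ᵐ ω ∂P, ∀ k : Fin hn → Fin n,
      (∀ β ∈ Sreg (w ω) (y ω) k, ∀ i j : Fin hn, i < j →
        (res (w ω) (y ω) β (k i)) ^ 2 < (res (w ω) (y ω) β (k j)) ^ 2) ∧
      (∀ η ∈ Sreg (w ω) (y ω) k, ∃ δ > (0 : ℝ), ∀ β ∈ ball η δ,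
        Oemp (w ω) (y ω) hn β
          = (1 / (n : ℝ)) * ∑ i : Fin hn, (res (w ω) (y ω) β (k i)) ^ 2) := by
  refine Filter.Eventually.of_forall fun ω k =>
    ⟨fun β hβ i j hij => sq_res_lt_of_mem_Sreg hβ hij, fun η hη => ?_⟩
  obtain ⟨δ, hδ, hball⟩ := Metric.eventually_nhds_iff.1 (eventually_sq_res_lt_of_mem_Sreg hη)
  exact ⟨δ, hδ, fun β hβ =>
    Oemp_eq_of_forall_sq_res_le hη.1.1 fun m hm i => (hball hβ m hm i).le⟩
end
end

section
/- Assume that W(β) = (y - w'β)² has a positive density for every β ∈ R^p and that E(ww') exists. Then the LTS population objective O(β) = E[(y - w'β)² 1((y - w'β)² ≤ q(β, α))] is continuous in β on R^p. -/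
open MeasureTheory Metric
open scoped ENNReal Classical

noncomputable section

/-- The (lower) `a`-quantile of a distribution `ν` on `ℝ`. -/
def quant (ν : Measure ℝ) (a : ℝ) : ℝ :=
  sInf {t : ℝ | a ≤ (ν (Set.Iic t)).toReal}

/-- `w = (1, x')'`. -/
def wcons {q : ℕ} (x : Fin q → ℝ) : Fin (q + 1) → ℝ := Fin.cons 1 x

/-- Population residual: for `z = (x, y)`, `r(β) = y - w'β` with `w = (1, x')'`. -/
def resP {q : ℕ} (z : (Fin q → ℝ) × ℝ) (β : Fin (q + 1) → ℝ) : ℝ :=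
  z.2 - ∑ j, wcons z.1 j * β j

/-- `q(β, a)`: the `a`-quantile of `W(β) = (y - w'β)²` under `μ`. -/
def qLTS {q : ℕ} (μ : Measure ((Fin q → ℝ) × ℝ)) (β : Fin (q + 1) → ℝ) (a : ℝ) : ℝ :=
  quant (μ.map fun z => (resP z β) ^ 2) a

/-- The population LTS objective `O(β) = E[(y - w'β)² 1((y - w'β)² ≤ q(β, a))]`. -/
def Opop {q : ℕ} (μ : Measure ((Fin q → ℝ) × ℝ)) (a : ℝ) (β : Fin (q + 1) → ℝ) : ℝ :=
  ∫ z, (if (resP z β) ^ 2 ≤ qLTS μ β a then (resP z β) ^ 2 else 0) ∂μ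

/-- A distribution on `ℝ` has a positive density (on the support `(0, ∞)` of a squared
residual) if it is given by a Lebesgue density which is positive on `(0, ∞)`. -/
def HasPositiveDensity (ν : Measure ℝ) : Prop :=
  ∃ f : ℝ → ℝ≥0∞, ν = (volume : Measure ℝ).withDensity f ∧ ∀ t : ℝ, 0 < t → 0 < f t

/-!
Write `ν_β` for the law of `W(β)`. It has no atoms, so its cdf `F_β` is continuous and
`F_β(q(β, a)) = a`; the layer-cake formula then gives `O(β) = ∫_{t > 0} (a - F_β(t))⁺ dt`.
For fixed `t`, `β ↦ F_β(t)` is continuous by dominated convergence, because the boundary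
`{W(β) = t}` is null. A second dominated convergence in the `t`-integral gives continuity of `O`.
-/

open Filter Set ProbabilityTheory
open scoped Topology

lemma continuous_cdf_of_nullSingletonClass (ν : Measure ℝ) [IsProbabilityMeasure ν]
    [NullSingletonClass ν] : Continuous (cdf ν) := by
  refine continuous_iff_continuousAt.2 fun x => ?_
  have hleft : Function.leftLim (cdf ν) x = cdf ν x := by
    have h := (cdf ν).measure_singleton x
    rw [measure_cdf, measure_singleton, eq_comm, ENNReal.ofReal_eq_zero, sub_nonpos] at h
    exact le_antisymm ((monotone_cdf ν).leftLim_le le_rfl) h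
  exact continuousAt_iff_continuous_left_right.2
    ⟨continuousWithinAt_Iio_iff_Iic.1
      ((monotone_cdf ν).continuousWithinAt_Iio_iff_leftLim_eq.2 hleft),
    (cdf ν).right_continuous x⟩

lemma quant_eq_sInf_cdf (ν : Measure ℝ) [IsProbabilityMeasure ν] (a : ℝ) :
    quant ν a = sInf {t | a ≤ cdf ν t} := by
  simp only [quant, cdf_eq_real, measureReal_def]

lemma cdf_quant (ν : Measure ℝ) [IsProbabilityMeasure ν] [NullSingletonClass ν] {a : ℝ}
    (ha₀ : 0 < a) (ha₁ : a < 1) : cdf ν (quant ν a) = a := by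
  have hF := continuous_cdf_of_nullSingletonClass ν
  set S := {t | a ≤ cdf ν t}
  have hne : S.Nonempty := ((tendsto_cdf_atTop ν).eventually_const_le ha₁).exists
  have hbdd : BddBelow S := by
    obtain ⟨T, hT⟩ := ((tendsto_cdf_atBot ν).eventually_lt_const ha₀).exists_forall_of_atBot
    exact ⟨T, fun t (ht : a ≤ cdf ν t) => le_of_not_gt fun htT => (hT t htT.le).not_ge ht⟩
  rw [quant_eq_sInf_cdf]
  refine le_antisymm ?_ (isClosed_le continuous_const hF |>.csInf_mem hne hbdd)
  refine le_of_tendsto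
    (hF.tendsto _ |>.mono_left nhdsWithin_le_nhds : Tendsto _ (𝓝[<] sInf S) _) ?_
  filter_upwards [self_mem_nhdsWithin] with t ht
  exact le_of_lt (not_le.1 fun h => (not_le.2 ht) (csInf_le hbdd h))

lemma integral_ite_le_eq_setIntegral_max_cdf_sub (ν : Measure ℝ) [IsProbabilityMeasure ν]
    (hν : ∀ᵐ x ∂ν, 0 ≤ x) (Q : ℝ) :
    ∫ x, (if x ≤ Q then x else 0) ∂ν = ∫ t in Ioi 0, max (cdf ν Q - cdf ν t) 0 := by
  set X : ℝ → ℝ := fun x => if x ≤ Q then x else 0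
  have hXm : Measurable X := Measurable.ite measurableSet_Iic measurable_id measurable_const
  have hX : ∀ᵐ x ∂ν, 0 ≤ X x ∧ ‖X x‖ ≤ |Q| := by
    filter_upwards [hν] with x hx
    by_cases h : x ≤ Q
    · simp [X, h, hx, abs_of_nonneg, hx.trans h]
    · simp [X, h]
  have hXint : Integrable X ν :=
    .of_bound hXm.aestronglyMeasurable _ (hX.mono fun _ h => h.2)
  rw [hXint.integral_eq_integral_meas_lt (hX.mono fun _ h => h.1)]
  refine setIntegral_congr_fun measurableSet_Ioi fun t (ht : 0 < t) => ?_
  have hset : {x | t < X x} = Ioc t Q := by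
    ext x
    by_cases h : x ≤ Q <;> simp [X, h, ht.not_gt]
  have hIoc : ν (Ioc t Q) = ENNReal.ofReal (cdf ν Q - cdf ν t) := by
    rw [← (cdf ν).measure_Ioc, measure_cdf]
  rw [hset, measureReal_def, hIoc, ENNReal.toReal_ofReal']

section ParametricCdf

variable {B : Type*} [TopologicalSpace B] [FirstCountableTopology B]

lemma continuousAt_measureReal_setOf_le {Ω : Type*} [MeasurableSpace Ω] {μ : Measure Ω}
    [IsFiniteMeasure μ] {g : B → Ω → ℝ} (hg : ∀ b, Measurable (g b))
    (hcont : ∀ ω, Continuous fun b => g b ω) {b₀ : B} {t : ℝ}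
    (hnull : μ {ω | g b₀ ω = t} = 0) :
    ContinuousAt (fun b => μ.real {ω | g b ω ≤ t}) b₀ := by
  have hind : ∀ b, μ.real {ω | g b ω ≤ t} = ∫ ω, {ω | g b ω ≤ t}.indicator 1 ω ∂μ := fun b =>
    (integral_indicator_one (measurableSet_le (hg b) measurable_const)).symm
  simp only [ContinuousAt, hind]
  refine tendsto_integral_filter_of_dominated_convergence (fun _ => 1)
    (.of_forall fun b => (measurable_const.indicator
      (measurableSet_le (hg b) measurable_const)).aestronglyMeasurable)
    (.of_forall fun b => .of_forall fun ω => ?_) (integrable_const 1) ?_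
  · by_cases h : g b ω ≤ t <;> simp [indicator, h]
  filter_upwards [measure_eq_zero_iff_ae_notMem.1 hnull] with ω (hω : g b₀ ω ≠ t)
  have hstable : ∀ᶠ b in 𝓝 b₀, (g b ω ≤ t ↔ g b₀ ω ≤ t) := by
    rcases hω.lt_or_gt with hlt | hgt
    · filter_upwards [(hcont ω).continuousAt.eventually_lt_const hlt] with b hb
      exact iff_of_true hb.le hlt.le
    · filter_upwards [(hcont ω).continuousAt.eventually_const_lt hgt] with b hb
      exact iff_of_false hb.not_ge hgt.not_ge
  refine tendsto_const_nhds.congr' ?_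
  filter_upwards [hstable] with b hb
  simp only [indicator, mem_ofPred_eq, hb]

/-- Dominating function `|a| 1_{(0, T]}`, where `cdf (ν b₀) T > a`: for `b` near `b₀` also
`cdf (ν b) T > a`, so the integrands vanish beyond `T`. -/
lemma continuous_setIntegral_max_sub_cdf (ν : B → Measure ℝ) [∀ b, IsProbabilityMeasure (ν b)]
    {a : ℝ} (ha : a < 1) (hν : ∀ t, Continuous fun b => cdf (ν b) t) :
    Continuous fun b => ∫ t in Ioi 0, max (a - cdf (ν b) t) 0 := by
  refine continuous_iff_continuousAt.2 fun b₀ => ?_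
  obtain ⟨T, hT⟩ := ((tendsto_cdf_atTop (ν b₀)).eventually_const_lt ha).exists
  refine tendsto_integral_filter_of_dominated_convergence ((Ioc 0 T).indicator fun _ => |a|)
    (.of_forall fun b => ((measurable_const.sub (monotone_cdf (ν b)).measurable).max
      measurable_const).aestronglyMeasurable) ?_ ?_
    (.of_forall fun t => (tendsto_const_nhds.sub ((hν t).tendsto b₀)).max tendsto_const_nhds)
  · filter_upwards [(hν T).continuousAt.eventually_const_lt hT] with b hb
    filter_upwards [ae_restrict_mem measurableSet_Ioi] with t (ht : 0 < t)
    rw [Real.norm_of_nonneg (le_max_right _ _)]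
    rcases le_or_gt t T with htT | hTt
    · rw [indicator_of_mem (show t ∈ Ioc 0 T from ⟨ht, htT⟩)]
      exact max_le ((sub_le_self _ (cdf_nonneg _ _)).trans (le_abs_self a)) (abs_nonneg a)
    · rw [max_eq_right (sub_nonpos.2 (hb.le.trans (monotone_cdf _ hTt.le)))]
      exact indicator_nonneg (fun _ _ => abs_nonneg a) t
  · exact (integrableOn_const (C := |a|) measure_Ioc_lt_top.ne).integrable_indicator
      measurableSet_Ioc |>.restrict

end ParametricCdf

lemma HasPositiveDensity.nullSingletonClass {ν : Measure ℝ} (h : HasPositiveDensity ν) :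
    NullSingletonClass ν := by
  obtain ⟨f, rfl, -⟩ := h
  infer_instance

section LTS

variable {q : ℕ}

lemma measurable_wcons (j : Fin (q + 1)) : Measurable fun x : Fin q → ℝ => wcons x j := by
  cases j using Fin.cases with
  | zero => simp [wcons]
  | succ i => simpa [wcons] using measurable_pi_apply i

lemma measurable_resP (β : Fin (q + 1) → ℝ) : Measurable fun z : (Fin q → ℝ) × ℝ => resP z β :=
  measurable_snd.sub (Finset.measurable_sum _ fun j _ =>
    ((measurable_wcons j).comp measurable_fst).mul_const _)

lemma continuous_resP (z : (Fin q → ℝ) × ℝ) : Continuous fun β : Fin (q + 1) → ℝ => resP z β :=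
  continuous_const.sub (continuous_finsetSum _ fun j _ => continuous_const.mul (continuous_apply j))

lemma measurable_resP_sq (β : Fin (q + 1) → ℝ) :
    Measurable fun z : (Fin q → ℝ) × ℝ => resP z β ^ 2 :=
  (measurable_resP β).pow_const 2

lemma Opop_eq_setIntegral_max_sub_cdf (μ : Measure ((Fin q → ℝ) × ℝ)) [IsProbabilityMeasure μ]
    {a : ℝ} (ha₀ : 0 < a) (ha₁ : a < 1) (β : Fin (q + 1) → ℝ)
    [NullSingletonClass (μ.map fun z => resP z β ^ 2)] :
    Opop μ a β = ∫ t in Ioi 0, max (a - cdf (μ.map fun z => resP z β ^ 2) t) 0 := by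
  have hW := measurable_resP_sq (q := q) β
  set ν := μ.map fun z => resP z β ^ 2
  have : IsProbabilityMeasure ν := Measure.isProbabilityMeasure_map hW.aemeasurable
  have hν : ∀ᵐ x ∂ν, 0 ≤ x :=
    (ae_map_iff hW.aemeasurable measurableSet_Ici).2 (.of_forall fun z => sq_nonneg _)
  calc Opop μ a β = ∫ x, (if x ≤ quant ν a then x else 0) ∂ν :=
        (integral_map hW.aemeasurable (Measurable.ite measurableSet_Iic measurable_id
          measurable_const).aestronglyMeasurable).symm
    _ = ∫ t in Ioi 0, max (cdf ν (quant ν a) - cdf ν t) 0 :=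
        integral_ite_le_eq_setIntegral_max_cdf_sub ν hν _
    _ = ∫ t in Ioi 0, max (a - cdf ν t) 0 := by rw [cdf_quant ν ha₀ ha₁]

end LTS

theorem stmt_7_general {q : ℕ} (μ : Measure ((Fin q → ℝ) × ℝ)) [IsProbabilityMeasure μ]
    (a c : ℝ) (hc : 1 / 2 < c ∧ c < 1) (ha : a ∈ Set.Icc (1 / 2) c)
    (hdens : ∀ β : Fin (q + 1) → ℝ, HasPositiveDensity (μ.map fun z => (resP z β) ^ 2)) :
    Continuous (Opop μ a) := by
  have ha₀ : 0 < a := by linarith [ha.1]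
  have ha₁ : a < 1 := ha.2.trans_lt hc.2
  have hatomless := fun β => (hdens β).nullSingletonClass
  have hprob := fun β =>
    Measure.isProbabilityMeasure_map (μ := μ) (measurable_resP_sq (q := q) β).aemeasurable
  rw [funext fun β => Opop_eq_setIntegral_max_sub_cdf μ ha₀ ha₁ β]
  refine continuous_setIntegral_max_sub_cdf _ ha₁ fun t =>
    continuous_iff_continuousAt.2 fun β => ?_
  simp only [cdf_eq_real, map_measureReal_apply (measurable_resP_sq _) measurableSet_Iic]
  refine continuousAt_measureReal_setOf_le measurable_resP_sq
    (fun z => (continuous_resP z).pow 2) ?_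
  exact (Measure.map_apply (measurable_resP_sq β) (measurableSet_singleton t)).symm.trans
    (measure_singleton t)

/-- Lemma 2.2 (i): if `W(β)` has a positive density for every `β` and `E(ww')` exists,
then the population LTS objective `O(β)` is continuous on `ℝ^p`. -/
theorem stmt_7 {q : ℕ} (μ : Measure ((Fin q → ℝ) × ℝ)) [IsProbabilityMeasure μ]
    (a c : ℝ) (hc : 1 / 2 < c ∧ c < 1) (ha : a ∈ Set.Icc (1 / 2) c)
    (hdens : ∀ β : Fin (q + 1) → ℝ, HasPositiveDensity (μ.map fun z => (resP z β) ^ 2))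
    (hmom : ∀ j j' : Fin (q + 1), Integrable (fun z => wcons z.1 j * wcons z.1 j') μ) :
    Continuous (Opop μ a) :=
  stmt_7_general μ a c hc ha hdens
end
end
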